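/- Completeness of H_IPL with respect to the restricted Nmatrix R(M_IPL): for every set Γ of intuitionistic formulas and every intuitionistic formula φ, if every level valuation v ∈ L_IPL with v(γ)=T for all γ ∈ Γ satisfies v(φ)=T, then Γ ⊢_IPL φ. -/
import Mathlib


/-- Intuitionistic formulas over signature Ω = {¬, →, ∨, ∧}. -/
inductive IF
  | var : ℕ → IF
  | neg : IF → IF
  | imp : IF → IF → IF
  | dis : IF → IF → IF
  | con : IF → IF → IF
deriving DecidableEq

/-- The three intuitionistic truth values F, U, T. -/
inductive VI
  | F | U | T
deriving DecidableEq

def inegOp : VI → Set VI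
  | .F => {.U, .T}
  | .U => {.U, .T}
  | .T => {.F}

def iimpOp : VI → VI → Set VI
  | .T, .T => {.T}
  | .T, _ => {.F}
  | _, .T => {.T}
  | _, _ => {.U, .T}

def idisOp : VI → VI → Set VI
  | .T, _ => {.T}
  | _, .T => {.T}
  | _, _ => {.F}

def iconOp : VI → VI → Set VI
  | .T, .T => {.T}
  | _, _ => {.F}

/-- Valuations over the Nmatrix M_IPL. -/
def IsValI (v : IF → VI) : Prop :=
  (∀ α, v (.neg α) ∈ inegOp (v α)) ∧
  (∀ α β, v (.imp α β) ∈ iimpOp (v α) (v β)) ∧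
  (∀ α β, v (.dis α β) ∈ idisOp (v α) (v β)) ∧
  (∀ α β, v (.con α β) ∈ iconOp (v α) (v β))

/-- Val₊(M_IPL): valuations taking only values T, F on propositional variables. -/
def ValPlus : Set (IF → VI) :=
  {v | IsValI v ∧ ∀ n, v (.var n) = VI.T ∨ v (.var n) = VI.F}

/-- Complexity of an intuitionistic formula. -/
def co : IF → ℕ
  | .var _ => 0
  | .neg α => co α + 1
  | .imp α β => co α + co β + 1
  | .dis α β => co α + co β + 1
  | .con α β => co α + co β + 1

/-- The levels L_k for IPL. -/
def LevelI : ℕ → Set (IF → VI)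
  | 0 => ValPlus
  | (k+1) => {v ∈ LevelI k | ∀ α, co α ≤ k + 1 → v α = VI.U →
      ∃ w ∈ LevelI k, w α = VI.F ∧ ∀ β, v β = VI.T → w β = VI.T}

/-- Intuitionistic level valuations L_IPL = ⋂_{k ≥ 0} L_k. -/
def LIPL : Set (IF → VI) := ⋂ k, LevelI k

/-- The consequence relation Γ ⊢_IPL φ of the Hilbert calculus H_IPL. -/
inductive IDeriv (Γ : Set IF) : IF → Prop
  | prem {φ : IF} : φ ∈ Γ → IDeriv Γ φ
  | ax1 (α β : IF) : IDeriv Γ (α.imp (β.imp α))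
  | ax2 (α β γ : IF) : IDeriv Γ ((α.imp (β.imp γ)).imp ((α.imp β).imp (α.imp γ)))
  | ax3 (α β : IF) : IDeriv Γ (α.imp (β.imp (α.con β)))
  | ax4 (α β : IF) : IDeriv Γ ((α.con β).imp α)
  | ax5 (α β : IF) : IDeriv Γ ((α.con β).imp β)
  | ax6 (α β : IF) : IDeriv Γ (α.imp (α.dis β))
  | ax7 (α β : IF) : IDeriv Γ (β.imp (α.dis β))
  | ax8 (α β γ : IF) : IDeriv Γ ((α.imp γ).imp ((β.imp γ).imp ((α.dis β).imp γ)))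
  | ax9 (α β : IF) : IDeriv Γ ((β.imp α).imp ((β.imp α.neg).imp β.neg))
  | ax10 (α β : IF) : IDeriv Γ (α.imp (α.neg.imp β))
  | mp {α β : IF} : IDeriv Γ (α.imp β) → IDeriv Γ α → IDeriv Γ β

/-- Δ is φ-saturated (w.r.t. ⊢_IPL). -/
def ISat (Δ : Set IF) (φ : IF) : Prop :=
  ¬ IDeriv Δ φ ∧ ∀ α ∉ Δ, IDeriv (insert α Δ) φ

open Classical in
/-- The valuation v_Δ associated to a φ-saturated set Δ in IPL. -/
noncomputable def vDeltaI (Δ : Set IF) : IF → VI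
  | .var n => if IF.var n ∈ Δ then VI.T else VI.F
  | .neg α => if IF.neg α ∈ Δ then VI.T else if α ∈ Δ then VI.F else VI.U
  | .imp α β => if IF.imp α β ∈ Δ then VI.T else if α ∈ Δ then VI.F else VI.U
  | .con α β => if α ∈ Δ ∧ β ∈ Δ then VI.T else VI.F
  | .dis α β => if α ∈ Δ ∨ β ∈ Δ then VI.T else VI.F

/-- Λ is closed under (immediate, hence all) subformulas. -/
def SubClosedI (Λ : Set IF) : Prop :=
  (∀ α, IF.neg α ∈ Λ → α ∈ Λ) ∧
  (∀ α β, IF.imp α β ∈ Λ → α ∈ Λ ∧ β ∈ Λ) ∧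
  (∀ α β, IF.dis α β ∈ Λ → α ∈ Λ ∧ β ∈ Λ) ∧
  (∀ α β, IF.con α β ∈ Λ → α ∈ Λ ∧ β ∈ Λ)

/-- Intuitionistic partial valuations with domain Λ (modelled as total functions
constrained on Λ). -/
def IsPValI (Λ : Set IF) (v : IF → VI) : Prop :=
  (∀ n, IF.var n ∈ Λ → v (.var n) = VI.T ∨ v (.var n) = VI.F) ∧
  (∀ α, IF.neg α ∈ Λ → v (.neg α) ∈ inegOp (v α)) ∧
  (∀ α β, IF.imp α β ∈ Λ → v (.imp α β) ∈ iimpOp (v α) (v β)) ∧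
  (∀ α β, IF.dis α β ∈ Λ → v (.dis α β) ∈ idisOp (v α) (v β)) ∧
  (∀ α β, IF.con α β ∈ Λ → v (.con α β) ∈ iconOp (v α) (v β))

/-- iPLV'(Λ): intuitionistic partial' level valuations over Λ. -/
def iPLV' (Λ : Set IF) : Set (IF → VI) :=
  {v | IsPValI Λ v ∧ ∀ α ∈ Λ, v α = VI.U →
    ∃ w ∈ LIPL, w α = VI.F ∧ ∀ β ∈ Λ, v β = VI.T → w β = VI.T}

/-- iPLV(Λ): intuitionistic partial level valuations over Λ, defined as the largest
subset of iPV(Λ) whose condition is witnessed inside itself. -/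
def iPLV (Λ : Set IF) : Set (IF → VI) :=
  ⋃₀ {S | (∀ v ∈ S, IsPValI Λ v) ∧
      ∀ v ∈ S, ∀ α ∈ Λ, v α = VI.U →
        ∃ w ∈ S, w α = VI.F ∧ ∀ β ∈ Λ, v β = VI.T → w β = VI.T}

/-- Set of subformulas of an intuitionistic formula. -/
def IF.subf : IF → Finset IF
  | .var n => {.var n}
  | .neg α => insert (.neg α) α.subf
  | .imp α β => insert (.imp α β) (α.subf ∪ β.subf)
  | .dis α β => insert (.dis α β) (α.subf ∪ β.subf)
  | .con α β => insert (.con α β) (α.subf ∪ β.subf)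

/-- Γ ⊨_iPLV φ : consequence w.r.t. the intuitionistic truth tables, over the set Λ
of subformulas of Γ ∪ {φ}. -/
def iPLVConseq (Γ : Finset IF) (φ : IF) : Prop :=
  ∀ v ∈ iPLV (↑(Γ.biUnion IF.subf ∪ φ.subf) : Set IF),
    (∀ β ∈ Γ, v β = VI.T) → v φ = VI.T

section Aux

theorem IDeriv_mono {Γ Γ' : Set IF} (hs : Γ ⊆ Γ') {φ : IF} (h : IDeriv Γ φ) :
    IDeriv Γ' φ := by
  induction h with
  | prem h => exact .prem (hs h)
  | ax1 α β => exact .ax1 α β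
  | ax2 α β γ => exact .ax2 α β γ
  | ax3 α β => exact .ax3 α β
  | ax4 α β => exact .ax4 α β
  | ax5 α β => exact .ax5 α β
  | ax6 α β => exact .ax6 α β
  | ax7 α β => exact .ax7 α β
  | ax8 α β γ => exact .ax8 α β γ
  | ax9 α β => exact .ax9 α β
  | ax10 α β => exact .ax10 α β
  | mp _ _ ih1 ih2 => exact .mp ih1 ih2

theorem IDeriv_id (Γ : Set IF) (α : IF) : IDeriv Γ (α.imp α) :=
  .mp (.mp (.ax2 α (α.imp α) α) (.ax1 α (α.imp α))) (.ax1 α α)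

theorem IDeriv_deduction {Γ : Set IF} {α β : IF}
    (h : IDeriv (insert α Γ) β) : IDeriv Γ (α.imp β) := by
  induction h with
  | @prem ψ h =>
    rcases h with h | h
    · exact h ▸ IDeriv_id Γ α
    · exact .mp (.ax1 ψ α) (.prem h)
  | ax1 a b => exact .mp (.ax1 _ α) (.ax1 a b)
  | ax2 a b c => exact .mp (.ax1 _ α) (.ax2 a b c)
  | ax3 a b => exact .mp (.ax1 _ α) (.ax3 a b)
  | ax4 a b => exact .mp (.ax1 _ α) (.ax4 a b)
  | ax5 a b => exact .mp (.ax1 _ α) (.ax5 a b)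
  | ax6 a b => exact .mp (.ax1 _ α) (.ax6 a b)
  | ax7 a b => exact .mp (.ax1 _ α) (.ax7 a b)
  | ax8 a b c => exact .mp (.ax1 _ α) (.ax8 a b c)
  | ax9 a b => exact .mp (.ax1 _ α) (.ax9 a b)
  | ax10 a b => exact .mp (.ax1 _ α) (.ax10 a b)
  | @mp a b _ _ ih1 ih2 => exact .mp (.mp (.ax2 α a b) ih1) ih2

theorem IDeriv_compact {Γ : Set IF} {φ : IF} (h : IDeriv Γ φ) :
    ∃ S : Finset IF, ↑S ⊆ Γ ∧ IDeriv ↑S φ := by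
  induction h with
  | @prem ψ h => exact ⟨{ψ}, by simpa using h, .prem (by simp)⟩
  | ax1 a b => exact ⟨∅, by simp, .ax1 a b⟩
  | ax2 a b c => exact ⟨∅, by simp, .ax2 a b c⟩
  | ax3 a b => exact ⟨∅, by simp, .ax3 a b⟩
  | ax4 a b => exact ⟨∅, by simp, .ax4 a b⟩
  | ax5 a b => exact ⟨∅, by simp, .ax5 a b⟩
  | ax6 a b => exact ⟨∅, by simp, .ax6 a b⟩
  | ax7 a b => exact ⟨∅, by simp, .ax7 a b⟩
  | ax8 a b c => exact ⟨∅, by simp, .ax8 a b c⟩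
  | ax9 a b => exact ⟨∅, by simp, .ax9 a b⟩
  | ax10 a b => exact ⟨∅, by simp, .ax10 a b⟩
  | mp _ _ ih1 ih2 =>
    obtain ⟨S1, hS1, hd1⟩ := ih1
    obtain ⟨S2, hS2, hd2⟩ := ih2
    have e1 : (↑S1 : Set IF) ⊆ ↑(S1 ∪ S2) := by
      intro x hx; simp only [Finset.coe_union]; exact Set.mem_union_left _ hx
    have e2 : (↑S2 : Set IF) ⊆ ↑(S1 ∪ S2) := by
      intro x hx; simp only [Finset.coe_union]; exact Set.mem_union_right _ hx
    refine ⟨S1 ∪ S2, ?_, .mp (IDeriv_mono e1 hd1) (IDeriv_mono e2 hd2)⟩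
    intro x hx; rcases Finset.mem_union.1 (by exact_mod_cast hx) with h | h
    · exact hS1 h
    · exact hS2 h

theorem lindenbaum {Γ : Set IF} {φ : IF} (h : ¬ IDeriv Γ φ) :
    ∃ Δ, Γ ⊆ Δ ∧ ISat Δ φ := by
  obtain ⟨Δ, hsub, hmax⟩ := zorn_subset_nonempty {Δ | ¬ IDeriv Δ φ}
    (fun c hc hchain hne => by
      refine ⟨⋃₀ c, ?_, fun s hs => Set.subset_sUnion_of_mem hs⟩
      intro hder
      obtain ⟨S, hSsub, hSder⟩ := IDeriv_compact hder
      -- find a single member of the chain containing S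
      have key : ∀ S : Finset IF, ↑S ⊆ ⋃₀ c → ∃ t ∈ c, ↑S ⊆ t := by
        intro S
        induction S using Finset.induction_on with
        | empty => intro _; obtain ⟨t, ht⟩ := hne; exact ⟨t, ht, by simp⟩
        | @insert a S ha ih =>
          intro hsub
          obtain ⟨t1, ht1, hst1⟩ := ih (by
            intro x hx; exact hsub (by simp [hx]))
          obtain ⟨t2, ht2c, hat2⟩ := hsub (show a ∈ (↑(insert a S) : Set IF) by simp)
          rcases hchain.total ht1 ht2c with hle | hle
          · exact ⟨t2, ht2c, by
              intro x hx
              rcases Finset.mem_insert.1 (Finset.mem_coe.1 hx) with rfl | hx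
              · exact hat2
              · exact hle (hst1 hx)⟩
          · exact ⟨t1, ht1, by
              intro x hx
              rcases Finset.mem_insert.1 (Finset.mem_coe.1 hx) with rfl | hx
              · exact hle hat2
              · exact hst1 hx⟩
      obtain ⟨t, htc, hSt⟩ := key S hSsub
      exact hc htc (IDeriv_mono hSt hSder))
    Γ h
  refine ⟨Δ, hsub, hmax.prop, fun α hα => ?_⟩
  by_contra hnd
  exact hα (hmax.2 hnd (Set.subset_insert _ _) (Set.mem_insert α Δ))

section Sat
variable {Δ : Set IF} {φ' : IF} (hsat : ISat Δ φ')
include hsat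

theorem sat_closed {α : IF} (h : IDeriv Δ α) : α ∈ Δ := by
  by_contra hα
  exact hsat.1 (.mp (IDeriv_deduction (hsat.2 α hα)) h)

theorem sat_cons {α : IF} (h1 : α ∈ Δ) (h2 : α.neg ∈ Δ) : False :=
  hsat.1 (.mp (.mp (.ax10 α φ') (.prem h1)) (.prem h2))

theorem sat_dis {α β : IF} (h : α.dis β ∈ Δ) : α ∈ Δ ∨ β ∈ Δ := by
  by_contra hn
  push_neg at hn
  have h1 : IDeriv Δ (α.imp φ') := IDeriv_deduction (hsat.2 α hn.1)
  have h2 : IDeriv Δ (β.imp φ') := IDeriv_deduction (hsat.2 β hn.2)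
  exact hsat.1 (.mp (.mp (.mp (.ax8 α β φ') h1) h2) (.prem h))

theorem sat_memT {ψ : IF} : vDeltaI Δ ψ = VI.T ↔ ψ ∈ Δ := by
  cases ψ with
  | var n => simp only [vDeltaI]; split_ifs with h <;> simp [h]
  | neg α => simp only [vDeltaI]; split_ifs with h h2 <;> simp [h]
  | imp α β => simp only [vDeltaI]; split_ifs with h h2 <;> simp [h]
  | dis α β =>
    simp only [vDeltaI]; split_ifs with h
    · refine iff_of_true rfl ?_
      rcases h with h | h
      · exact sat_closed hsat (.mp (.ax6 α β) (.prem h))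
      · exact sat_closed hsat (.mp (.ax7 α β) (.prem h))
    · exact iff_of_false (by simp) (fun hm => h (sat_dis hsat hm))
  | con α β =>
    simp only [vDeltaI]; split_ifs with h
    · exact iff_of_true rfl
        (sat_closed hsat (.mp (.mp (.ax3 α β) (.prem h.1)) (.prem h.2)))
    · refine iff_of_false (by simp) (fun hm => h ?_)
      exact ⟨sat_closed hsat (.mp (.ax4 α β) (.prem hm)),
        sat_closed hsat (.mp (.ax5 α β) (.prem hm))⟩

theorem sat_isval : IsValI (vDeltaI Δ) := by
  refine ⟨fun α => ?_, fun α β => ?_, fun α β => ?_, fun α β => ?_⟩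
  · -- neg
    show vDeltaI Δ (IF.neg α) ∈ inegOp (vDeltaI Δ α)
    by_cases h1 : IF.neg α ∈ Δ
    · have hv : vDeltaI Δ (IF.neg α) = VI.T := (sat_memT hsat).2 h1
      have hα : α ∉ Δ := fun h => sat_cons hsat h h1
      have : vDeltaI Δ α ≠ VI.T := fun h => hα ((sat_memT hsat).1 h)
      rw [hv]
      cases hveq : vDeltaI Δ α <;>
        first | exact absurd hveq this | simp [inegOp]
    · by_cases h2 : α ∈ Δ
      · have : vDeltaI Δ (IF.neg α) = VI.F := by simp [vDeltaI, h1, h2]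
        have hα : vDeltaI Δ α = VI.T := (sat_memT hsat).2 h2
        rw [this, hα]; simp [inegOp]
      · have : vDeltaI Δ (IF.neg α) = VI.U := by simp [vDeltaI, h1, h2]
        have hα : vDeltaI Δ α ≠ VI.T := fun h => h2 ((sat_memT hsat).1 h)
        rw [this]
        cases hveq : vDeltaI Δ α <;>
          first | exact absurd hveq hα | simp [inegOp]
  · -- imp
    show vDeltaI Δ (IF.imp α β) ∈ iimpOp (vDeltaI Δ α) (vDeltaI Δ β)
    by_cases h1 : IF.imp α β ∈ Δ
    · have hv : vDeltaI Δ (IF.imp α β) = VI.T := (sat_memT hsat).2 h1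
      rw [hv]
      by_cases h2 : vDeltaI Δ α = VI.T
      · have : β ∈ Δ := sat_closed hsat (.mp (.prem h1) (.prem ((sat_memT hsat).1 h2)))
        rw [h2, (sat_memT hsat).2 this]; simp [iimpOp]
      · cases hva : vDeltaI Δ α <;> cases hvb : vDeltaI Δ β <;>
          simp [iimpOp] <;> simp [hva] at h2
    · have hb : β ∉ Δ := fun hb => h1 (sat_closed hsat (.mp (.ax1 β α) (.prem hb)))
      have hvb : vDeltaI Δ β ≠ VI.T := fun h => hb ((sat_memT hsat).1 h)
      by_cases h2 : α ∈ Δ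
      · have : vDeltaI Δ (IF.imp α β) = VI.F := by simp [vDeltaI, h1, h2]
        rw [this, (sat_memT hsat).2 h2]
        cases hvbe : vDeltaI Δ β <;> simp [iimpOp] <;> simp [hvbe] at hvb
      · have : vDeltaI Δ (IF.imp α β) = VI.U := by simp [vDeltaI, h1, h2]
        have hva : vDeltaI Δ α ≠ VI.T := fun h => h2 ((sat_memT hsat).1 h)
        rw [this]
        cases hvae : vDeltaI Δ α <;> cases hvbe : vDeltaI Δ β <;>
          simp [iimpOp] <;> first
          | (exfalso; exact hva hvae) | (exfalso; exact hvb hvbe)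
  · -- dis
    show vDeltaI Δ (IF.dis α β) ∈ idisOp (vDeltaI Δ α) (vDeltaI Δ β)
    by_cases h1 : α ∈ Δ
    · have : vDeltaI Δ (IF.dis α β) = VI.T := by simp [vDeltaI, h1]
      rw [this, (sat_memT hsat).2 h1]; simp [idisOp]
    · by_cases h2 : β ∈ Δ
      · have : vDeltaI Δ (IF.dis α β) = VI.T := by simp [vDeltaI, h2]
        rw [this, (sat_memT hsat).2 h2]
        cases hva : vDeltaI Δ α <;> simp [idisOp]
      · have : vDeltaI Δ (IF.dis α β) = VI.F := by simp [vDeltaI, h1, h2]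
        have hva : vDeltaI Δ α ≠ VI.T := fun h => h1 ((sat_memT hsat).1 h)
        have hvb : vDeltaI Δ β ≠ VI.T := fun h => h2 ((sat_memT hsat).1 h)
        rw [this]
        cases hvae : vDeltaI Δ α <;> cases hvbe : vDeltaI Δ β <;>
          simp [idisOp] <;> first
          | (exact hva hvae) | (exact hvb hvbe)
  · -- con
    show vDeltaI Δ (IF.con α β) ∈ iconOp (vDeltaI Δ α) (vDeltaI Δ β)
    by_cases h1 : α ∈ Δ ∧ β ∈ Δ
    · have : vDeltaI Δ (IF.con α β) = VI.T := by simp [vDeltaI, h1]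
      rw [this, (sat_memT hsat).2 h1.1, (sat_memT hsat).2 h1.2]; simp [iconOp]
    · have : vDeltaI Δ (IF.con α β) = VI.F := by simp [vDeltaI, h1]
      rw [this]
      have : vDeltaI Δ α ≠ VI.T ∨ vDeltaI Δ β ≠ VI.T := by
        by_contra hn; push_neg at hn
        exact h1 ⟨(sat_memT hsat).1 hn.1, (sat_memT hsat).1 hn.2⟩
      cases hvae : vDeltaI Δ α <;> cases hvbe : vDeltaI Δ β <;>
        simp [iconOp] <;> simp [hvae, hvbe] at this

end Sat

theorem sat_level (k : ℕ) : ∀ (Δ : Set IF) (φ' : IF), ISat Δ φ' →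
    vDeltaI Δ ∈ LevelI k := by
  induction k with
  | zero =>
    intro Δ φ' hsat
    refine ⟨sat_isval hsat, fun n => ?_⟩
    simp only [vDeltaI]; split_ifs <;> simp
  | succ k ih =>
    intro Δ φ' hsat
    refine ⟨ih Δ φ' hsat, fun α _ hU => ?_⟩
    cases α with
    | var n => simp only [vDeltaI] at hU; split_ifs at hU
    | dis a b => simp only [vDeltaI] at hU; split_ifs at hU
    | con a b => simp only [vDeltaI] at hU; split_ifs at hU
    | neg a =>
      have hmem : IF.neg a ∉ Δ ∧ a ∉ Δ := by
        by_contra hn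
        simp only [vDeltaI] at hU
        split_ifs at hU with h1 h2 <;> simp_all
      have hnd : ¬ IDeriv (insert a Δ) (IF.neg a) := by
        intro hd
        have h2 : IDeriv Δ (a.imp a.neg) := IDeriv_deduction hd
        have : IDeriv Δ a.neg := .mp (.mp (.ax9 a a) (IDeriv_id Δ a)) h2
        exact hmem.1 (sat_closed hsat this)
      obtain ⟨Δ', hsub, hsat'⟩ := lindenbaum hnd
      refine ⟨vDeltaI Δ', ih Δ' _ hsat', ?_, ?_⟩
      · have h1 : IF.neg a ∉ Δ' := fun h => hsat'.1 (.prem h)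
        have h2 : a ∈ Δ' := hsub (Set.mem_insert a Δ)
        simp [vDeltaI, h1, h2]
      · intro β hβ
        exact (sat_memT hsat').2 (hsub (Set.mem_insert_of_mem _
          ((sat_memT hsat).1 hβ)))
    | imp a b =>
      have hmem : IF.imp a b ∉ Δ ∧ a ∉ Δ := by
        by_contra hn
        simp only [vDeltaI] at hU
        split_ifs at hU with h1 h2 <;> simp_all
      have hnd : ¬ IDeriv (insert a Δ) b := by
        intro hd
        exact hmem.1 (sat_closed hsat (IDeriv_deduction hd))
      obtain ⟨Δ', hsub, hsat'⟩ := lindenbaum hnd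
      refine ⟨vDeltaI Δ', ih Δ' _ hsat', ?_, ?_⟩
      · have h2 : a ∈ Δ' := hsub (Set.mem_insert a Δ)
        have h1 : IF.imp a b ∉ Δ' := fun h =>
          hsat'.1 (.mp (.prem h) (.prem h2))
        simp [vDeltaI, h1, h2]
      · intro β hβ
        exact (sat_memT hsat').2 (hsub (Set.mem_insert_of_mem _
          ((sat_memT hsat).1 hβ)))

end Aux

/-- Completeness of H_IPL w.r.t. R(M_IPL). -/
theorem ipl_completeness (Γ : Set IF) (φ : IF)
    (h : ∀ v ∈ LIPL, (∀ γ ∈ Γ, v γ = VI.T) → v φ = VI.T) :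
    IDeriv Γ φ := by
  by_contra hnd
  obtain ⟨Δ, hsub, hsat⟩ := lindenbaum hnd
  have hmem : vDeltaI Δ ∈ LIPL := Set.mem_iInter.2 fun k => sat_level k Δ φ hsat
  have hT : ∀ γ ∈ Γ, vDeltaI Δ γ = VI.T := fun γ hγ =>
    (sat_memT hsat).2 (hsub hγ)
  have := h (vDeltaI Δ) hmem hT
  exact hsat.1 (.prem ((sat_memT hsat).1 this))
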